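/- Let X be symmetric positive definite, and suppose U = (D, m, E) satisfies D > 0 and E − sqrt(D² + m X mᵀ) > 0. Then for any v ∈ ℝᵈ with v X vᵀ ≤ 1, one has E − v X mᵀ − D·sqrt(1 − v X vᵀ) ≥ E − sqrt(D² + m X mᵀ) > 0. -/

import Mathlib

/-!
Cauchy–Schwarz for `⟨a, b⟩ = a X bᵀ` on the vectors `(v, √(1 - ⟨v, v⟩))` and `(m, D)` extended by
one coordinate, split into Cauchy–Schwarz for `⟨·, ·⟩` followed by the two-dimensional one.
-/

open Matrix

theorem Matrix.PosSemidef.dotProduct_mulVec_sq_le {n : Type*} [Fintype n]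
    {X : Matrix n n ℝ} (hX : X.PosSemidef) (v w : n → ℝ) :
    (v ⬝ᵥ X *ᵥ w) ^ 2 ≤ (v ⬝ᵥ X *ᵥ v) * (w ⬝ᵥ X *ᵥ w) := by
  let := X.toSeminormedAddCommGroup hX
  let := X.toInnerProductSpace hX
  have h_inner (a b : n → ℝ) : a ⬝ᵥ X *ᵥ b = inner ℝ a b := dotProduct_comm _ _
  rw [h_inner, h_inner, h_inner, sq]
  exact real_inner_mul_inner_self_le v w

theorem add_mul_sqrt_one_sub_le_sqrt {p q r : ℝ} (D : ℝ) (hp₀ : 0 ≤ p) (hp₁ : p ≤ 1)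
    (hr : 0 ≤ r) (hq : q ^ 2 ≤ p * r) : q + D * √(1 - p) ≤ √(D ^ 2 + r) := by
  have hq' : q ≤ √p * √r := by
    rw [← Real.sqrt_mul hp₀]
    exact Real.le_sqrt_of_sq_le hq
  have hCS : (√p * √r + √(1 - p) * D) ^ 2 ≤ D ^ 2 + r := by
    have lagrange : (√p * √r + √(1 - p) * D) ^ 2 + (√p * D - √(1 - p) * √r) ^ 2
        = (√p ^ 2 + √(1 - p) ^ 2) * (√r ^ 2 + D ^ 2) := by ring
    rw [Real.sq_sqrt hp₀, Real.sq_sqrt (sub_nonneg.2 hp₁), Real.sq_sqrt hr] at lagrange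
    linarith [sq_nonneg (√p * D - √(1 - p) * √r)]
  linarith [Real.le_sqrt_of_sq_le hCS]

theorem stmt2_general (d : ℕ) (X : Matrix (Fin d) (Fin d) ℝ) (hX : X.PosDef)
    (D E : ℝ) (m : Fin d → ℝ)
    (hq : 0 < E - Real.sqrt (D ^ 2 + m ⬝ᵥ X.mulVec m))
    (v : Fin d → ℝ) (hv : v ⬝ᵥ X.mulVec v ≤ 1) :
    E - Real.sqrt (D ^ 2 + m ⬝ᵥ X.mulVec m) ≤
      E - v ⬝ᵥ X.mulVec m - D * Real.sqrt (1 - v ⬝ᵥ X.mulVec v) ∧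
    0 < E - Real.sqrt (D ^ 2 + m ⬝ᵥ X.mulVec m) := by
  have hpsd := hX.posSemidef
  have h_nonneg (w : Fin d → ℝ) : 0 ≤ w ⬝ᵥ X *ᵥ w := by
    simpa using hpsd.dotProduct_mulVec_nonneg w
  have key := add_mul_sqrt_one_sub_le_sqrt D (h_nonneg v) hv (h_nonneg m)
    (hpsd.dotProduct_mulVec_sq_le v m)
  exact ⟨by linarith, hq⟩

/-- the Cauchy–Schwarz estimate: if `D > 0` and `E - sqrt(D² + m X mᵀ) > 0`,
then for all `v` with `v X vᵀ ≤ 1`,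
`E - v X mᵀ - D sqrt(1 - v X vᵀ) ≥ E - sqrt(D² + m X mᵀ) > 0`. -/
theorem stmt2 (d : ℕ) (X : Matrix (Fin d) (Fin d) ℝ) (hX : X.PosDef)
    (D E : ℝ) (m : Fin d → ℝ) (hD : 0 < D)
    (hq : 0 < E - Real.sqrt (D ^ 2 + m ⬝ᵥ X.mulVec m))
    (v : Fin d → ℝ) (hv : v ⬝ᵥ X.mulVec v ≤ 1) :
    E - Real.sqrt (D ^ 2 + m ⬝ᵥ X.mulVec m) ≤
      E - v ⬝ᵥ X.mulVec m - D * Real.sqrt (1 - v ⬝ᵥ X.mulVec v) ∧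
    0 < E - Real.sqrt (D ^ 2 + m ⬝ᵥ X.mulVec m) :=
  stmt2_general d X hX D E m hq v hv
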